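/- Let e_1, …, e_n (n ≥ 1) be vectors of a real inner product space and let S = {(e_1 + ε_2 e_2 + ⋯ + ε_n e_n)/2 : ε_2, …, ε_n ∈ {−1, +1}}. Then there exists x ∈ S with N(x) ≤ (N(e_1) + ⋯ + N(e_n))/4; moreover, the minimum of N over S equals (N(e_1) + ⋯ + N(e_n))/4 if and only if the vectors e_1, …, e_n are pairwise orthogonal. -/

import Mathlib

/-!
Averaged over all `2ⁿ` sign vectors `ε`, the cross terms of `N(∑ εᵢ eᵢ)` cancel, so the mean of
`N(∑ εᵢ eᵢ)` is `∑ N(eᵢ)` and some sign vector does at least as well; normalising `ε₁ = 1` costs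
nothing because `N(-x) = N(x)`. The minimum equals the mean iff `N(∑ εᵢ eᵢ)` is constant in `ε`.
Flipping the sign `εₖ` then shows `⟪∑ εᵢ eᵢ, eₖ⟫ = εₖ N(eₖ)` for every `ε`, and comparing two
sign vectors that differ only at `j ≠ k` gives `⟪eⱼ, eₖ⟫ = 0`.
-/

open scoped BigOperators
noncomputable section

variable {F : Type*} [NormedAddCommGroup F] [InnerProductSpace ℝ F]

/-- `Nm x = ⟪x, x⟫`, the square of the usual norm. -/
def Nm (x : F) : ℝ := inner ℝ x x

open Finset

theorem Nm_smul (t : ℝ) (x : F) : Nm (t • x) = t * t * Nm x := by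
  simp only [Nm, real_inner_smul_left, real_inner_smul_right]
  ring

theorem Nm_sub_smul (x y : F) (t : ℝ) :
    Nm (x - t • y) = Nm x - 2 * t * inner ℝ x y + t * t * Nm y := by
  simp only [Nm, inner_sub_left, inner_sub_right, real_inner_smul_left, real_inner_smul_right,
    real_inner_comm x y]
  ring

theorem csInf_image_eq_iff_forall_le {α : Type*} {s : Set α} (hs : s.Finite) {f : α → ℝ}
    {a : α} {c : ℝ} (ha : a ∈ s) (hac : f a ≤ c) :
    sInf (f '' s) = c ↔ ∀ x ∈ s, c ≤ f x := by
  refine ⟨fun h x hx => h ▸ csInf_le (hs.image f).bddBelow ⟨x, hx, rfl⟩, fun h => ?_⟩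
  refine IsLeast.csInf_eq ⟨⟨a, ha, le_antisymm hac (h a ha)⟩, ?_⟩
  rintro _ ⟨x, hx, rfl⟩
  exact h x hx

section Signs

variable {ι : Type*} [Fintype ι]

theorem Nm_sum_smul (e : ι → F) (ε : ι → ℝ) :
    Nm (∑ i, ε i • e i) = ∑ i, ∑ j, ε i * ε j * inner ℝ (e i) (e j) := by
  simp only [Nm, sum_inner, inner_sum, real_inner_smul_left, real_inner_smul_right]
  exact sum_congr rfl fun i _ => sum_congr rfl fun j _ => by rw [real_inner_comm]; ring

variable [DecidableEq ι]

theorem sum_update_smul (e : ι → F) (ε : ι → ℝ) (k : ι) (t : ℝ) :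
    ∑ i, Function.update ε k t i • e i = ∑ i, ε i • e i + (t - ε k) • e k := by
  rw [← add_sum_erase _ _ (mem_univ k), ← add_sum_erase _ _ (mem_univ k)]
  rw [sum_congr rfl fun i hi => by rw [Function.update_of_ne (ne_of_mem_erase hi)]]
  simp only [Function.update_self, sub_smul]
  abel

def signs (ι : Type*) [Fintype ι] [DecidableEq ι] : Finset (ι → ℝ) :=
  Fintype.piFinset fun _ => {1, -1}

theorem mem_signs {ε : ι → ℝ} : ε ∈ signs ι ↔ ∀ i, ε i = 1 ∨ ε i = -1 := by
  simp [signs]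

theorem one_mem_signs : (1 : ι → ℝ) ∈ signs ι :=
  mem_signs.2 fun _ => Or.inl rfl

theorem update_neg_mem_signs {ε : ι → ℝ} (hε : ε ∈ signs ι) (k : ι) :
    Function.update ε k (-ε k) ∈ signs ι := by
  refine mem_signs.2 fun i => ?_
  rcases eq_or_ne i k with rfl | hik
  · rcases mem_signs.1 hε i with h | h <;> simp [h]
  · simpa [Function.update_of_ne hik] using mem_signs.1 hε i

theorem mul_self_eq_one_of_mem_signs {ε : ι → ℝ} (hε : ε ∈ signs ι) (i : ι) :
    ε i * ε i = 1 := by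
  rcases mem_signs.1 hε i with h | h <;> simp [h]

theorem sum_signs_const (c : ℝ) : ∑ _ε ∈ signs ι, c = 2 ^ Fintype.card ι * c := by
  simp [signs, Fintype.card_piFinset, card_pair (by norm_num : (1 : ℝ) ≠ -1)]

theorem sum_signs_mul_apply (i j : ι) :
    ∑ ε ∈ signs ι, ε i * ε j = if i = j then (2 : ℝ) ^ Fintype.card ι else 0 := by
  split_ifs with hij
  · subst hij
    rw [sum_congr rfl fun ε hε => mul_self_eq_one_of_mem_signs hε i, sum_signs_const, mul_one]
  · calc ∑ ε ∈ signs ι, ε i * ε j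
        = ∑ ε ∈ signs ι, ∏ m, if m ∈ ({i, j} : Finset ι) then ε m else 1 := by
          refine sum_congr rfl fun ε _ => ?_
          rw [prod_ite_mem, univ_inter, prod_pair hij]
      _ = ∏ m, ∑ x ∈ ({1, -1} : Finset ℝ), if m ∈ ({i, j} : Finset ι) then x else 1 :=
          (prod_univ_sum (fun _ => {1, -1})
            fun m x => if m ∈ ({i, j} : Finset ι) then x else 1).symm
      _ = 0 := by
          refine prod_eq_zero (mem_univ i) ?_
          rw [sum_pair (by norm_num : (1 : ℝ) ≠ -1)]
          simp

variable (e : ι → F)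

theorem sum_signs_Nm_sum_smul :
    ∑ ε ∈ signs ι, Nm (∑ i, ε i • e i) = 2 ^ Fintype.card ι * ∑ i, Nm (e i) := by
  calc ∑ ε ∈ signs ι, Nm (∑ i, ε i • e i)
      = ∑ i, ∑ j, (∑ ε ∈ signs ι, ε i * ε j) * inner ℝ (e i) (e j) := by
        simp only [Nm_sum_smul, sum_mul]
        rw [sum_comm]
        exact sum_congr rfl fun i _ => sum_comm
    _ = 2 ^ Fintype.card ι * ∑ i, Nm (e i) := by
        simp [sum_signs_mul_apply, mul_sum, Nm]

theorem exists_mem_signs_Nm_sum_smul_le :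
    ∃ ε ∈ signs ι, Nm (∑ i, ε i • e i) ≤ ∑ i, Nm (e i) :=
  exists_le_of_sum_le ⟨1, one_mem_signs⟩ (by rw [sum_signs_Nm_sum_smul, sum_signs_const])

theorem Nm_sum_smul_eq_of_forall_le (h : ∀ ε ∈ signs ι, ∑ i, Nm (e i) ≤ Nm (∑ i, ε i • e i)) :
    ∀ ε ∈ signs ι, Nm (∑ i, ε i • e i) = ∑ i, Nm (e i) := fun ε hε =>
  ((sum_eq_sum_iff_of_le h).1 (by rw [sum_signs_Nm_sum_smul, sum_signs_const]) ε hε).symm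

theorem Nm_sum_smul_of_pairwise_inner_eq_zero (h : Pairwise fun i j => inner ℝ (e i) (e j) = 0)
    {ε : ι → ℝ} (hε : ε ∈ signs ι) : Nm (∑ i, ε i • e i) = ∑ i, Nm (e i) := by
  rw [Nm_sum_smul]
  refine sum_congr rfl fun i _ => ?_
  rw [sum_eq_single i (fun j _ hji => by rw [h hji.symm, mul_zero]) (by simp),
    mul_self_eq_one_of_mem_signs hε, one_mul, Nm]

theorem inner_sum_smul_eq_of_Nm_sum_smul_eq {C : ℝ}
    (h : ∀ ε ∈ signs ι, Nm (∑ i, ε i • e i) = C) {ε : ι → ℝ} (hε : ε ∈ signs ι) (k : ι) :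
    inner ℝ (∑ i, ε i • e i) (e k) = ε k * Nm (e k) := by
  have hflip := h _ (update_neg_mem_signs hε k)
  rw [sum_update_smul, show (-ε k - ε k) • e k = -((2 * ε k) • e k) by module, ← sub_eq_add_neg,
    Nm_sub_smul, h ε hε] at hflip
  linear_combination (-ε k / 4) * hflip -
    (inner ℝ (∑ i, ε i • e i) (e k) - ε k * Nm (e k)) * mul_self_eq_one_of_mem_signs hε k

theorem pairwise_inner_eq_zero_of_Nm_sum_smul_eq {C : ℝ}
    (h : ∀ ε ∈ signs ι, Nm (∑ i, ε i • e i) = C) :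
    Pairwise fun i j => inner ℝ (e i) (e j) = 0 := by
  intro i j hij
  have hone := inner_sum_smul_eq_of_Nm_sum_smul_eq e h one_mem_signs j
  have hflip := inner_sum_smul_eq_of_Nm_sum_smul_eq e h (update_neg_mem_signs one_mem_signs i) j
  rw [sum_update_smul, inner_add_left, hone, Function.update_of_ne hij.symm,
    real_inner_smul_left] at hflip
  norm_num at hflip
  exact hflip

theorem forall_le_Nm_sum_smul_iff_pairwise_inner_eq_zero :
    (∀ ε ∈ signs ι, ∑ i, Nm (e i) ≤ Nm (∑ i, ε i • e i)) ↔
      Pairwise fun i j => inner ℝ (e i) (e j) = 0 :=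
  ⟨fun h => pairwise_inner_eq_zero_of_Nm_sum_smul_eq e (Nm_sum_smul_eq_of_forall_le e h),
    fun h _ hε => (Nm_sum_smul_of_pairwise_inner_eq_zero e h hε).ge⟩

theorem image_Nm_half_sum_smul (i₀ : ι) :
    Nm '' {x | ∃ ε : ι → ℝ, (∀ i, ε i = 1 ∨ ε i = -1) ∧ ε i₀ = 1 ∧
      x = (2 : ℝ)⁻¹ • ∑ i, ε i • e i} =
      (fun ε : ι → ℝ => Nm (∑ i, ε i • e i) / 4) '' ↑(signs ι) := by
  ext y
  constructor
  · rintro ⟨_, ⟨ε, hε, -, rfl⟩, rfl⟩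
    refine ⟨ε, mem_signs.2 hε, ?_⟩
    simp only [Nm_smul]
    ring
  · rintro ⟨ε, hε, rfl⟩
    have hsq := mul_self_eq_one_of_mem_signs hε i₀
    refine ⟨_, ⟨fun i => ε i₀ * ε i, fun i => ?_, hsq, rfl⟩, ?_⟩
    · rcases mem_signs.1 hε i with h | h <;> rcases mem_signs.1 hε i₀ with h₀ | h₀ <;>
        simp [h, h₀]
    · simp only [mul_smul, ← smul_sum, Nm_smul, hsq]
      ring

end Signs

/-- with `S = {(e₁ + ε₂e₂ + ⋯ + εₙeₙ)/2 : εᵢ ∈ {±1}}`, there is an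
`x ∈ S` with `N(x) ≤ (N(e₁)+⋯+N(eₙ))/4`; moreover the minimum of `N` over `S`
equals `(N(e₁)+⋯+N(eₙ))/4` iff the `eᵢ` are pairwise orthogonal. -/
theorem half_sum_min_bound (n : ℕ) (hn : 1 ≤ n) (e : Fin n → F)
    (S : Set F)
    (hS : S = { x | ∃ ε : Fin n → ℝ, (∀ i, ε i = 1 ∨ ε i = -1) ∧ ε ⟨0, by omega⟩ = 1 ∧
      x = (2 : ℝ)⁻¹ • ∑ i, ε i • e i }) :
    (∃ x ∈ S, Nm x ≤ (∑ i, Nm (e i)) / 4) ∧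
      (sInf (Nm '' S) = (∑ i, Nm (e i)) / 4 ↔
        ∀ i j : Fin n, i ≠ j → (inner ℝ (e i) (e j) : ℝ) = 0) := by
  have himage : Nm '' S = (fun ε : Fin n → ℝ => Nm (∑ i, ε i • e i) / 4) '' ↑(signs (Fin n)) :=
    hS ▸ image_Nm_half_sum_smul e _
  obtain ⟨ε₀, hε₀, hle⟩ := exists_mem_signs_Nm_sum_smul_le e
  have hle₀ : Nm (∑ i, ε₀ i • e i) / 4 ≤ (∑ i, Nm (e i)) / 4 := by linarith
  constructor
  · obtain ⟨x, hx, hNm⟩ : Nm (∑ i, ε₀ i • e i) / 4 ∈ Nm '' S := himage ▸ ⟨ε₀, hε₀, rfl⟩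
    exact ⟨x, hx, hNm ▸ hle₀⟩
  · rw [himage, csInf_image_eq_iff_forall_le (signs (Fin n)).finite_toSet hε₀ hle₀]
    simp only [div_le_div_iff_of_pos_right (four_pos : (0 : ℝ) < 4)]
    exact forall_le_Nm_sum_smul_iff_pairwise_inner_eq_zero e

end
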